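/- Under this setup, the expectation of the maximizing cdf of the DKW band on [0,b] equals the corresponding boosted empirical average: ∫_{(0,b)} (1 − max(F̂(t)−χ, 0)) dt = (1/k)·( χk·b + (m+1−χk)·x_m + ∑_{i=m+1}^{k−1} x_i ). (That is, shifting a χ·k fraction of the empirical probability mass to the upper bound b yields the mean of the upper DKW band cdf max(F̂−χ,0).) -/

import Mathlib

/-!
Since the samples are sorted, `#{i | x i ≤ t} > j` exactly when `x j ≤ t`. Hence, with
`m = ⌊χk⌋`, the band `k · max (F̂ t - χ) 0` is the count of the samples at or below `t` after
removing mass `χk` from the bottom: weight `m + 1 - χk` on the indicator of `[x m, ∞)` and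
weight `1` on the indicator of `[x i, ∞)` for each `i > m`. Each indicator integrates over
`(0, b)` to `b - x i`, and the weights sum to `k - χk`.
-/

open MeasureTheory Finset ENNReal

namespace Monotone

variable {α : Type*} [Preorder α] [DecidableLE α] {k : ℕ} {x : Fin k → α} {t : α} {j : Fin k}

theorem card_filter_le_eq_of_le (hx : Monotone x) (hj : x j ≤ t) :
    #{i | x i ≤ t} = j + 1 + #{i : Fin k | (j : ℕ) < i ∧ x i ≤ t} := by
  have hlow : ({i | x i ≤ t ∧ i ≤ j} : Finset (Fin k)) = Iic j := by
    ext i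
    simpa using fun hij : i ≤ j => (hx hij).trans hj
  rw [← card_filter_add_card_filter_not (s := {i | x i ≤ t}) (· ≤ j), filter_filter, hlow,
    Fin.card_Iic, filter_filter]
  congr 3
  ext i
  simp [and_comm]

theorem card_filter_le_le_of_not_le (hx : Monotone x) (hj : ¬ x j ≤ t) :
    #{i | x i ≤ t} ≤ j := by
  refine (card_le_card fun i hi => ?_).trans (Fin.card_Iio j).le
  simp only [mem_filter, mem_univ, true_and] at hi
  exact mem_Iio.2 (lt_of_not_ge fun hji => hj ((hx hji).trans hi))

end Monotone

theorem Fin.card_filter_lt_val {k m : ℕ} (hm : m < k) :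
    #{i : Fin k | m < (i : ℕ)} = k - (m + 1) := by
  have hIoi : ({i | m < (i : ℕ)} : Finset (Fin k)) = Ioi ⟨m, hm⟩ := by
    ext
    simp only [mem_filter, mem_univ, true_and, mem_Ioi, Fin.lt_def]
  rw [hIoi, Fin.card_Ioi, Fin.val_mk]
  omega

theorem integral_Ioo_indicator_Ici_one {a b c : ℝ} (hac : a ≤ c) (hcb : c ≤ b) :
    ∫ t in Set.Ioo a b, (Set.Ici c).indicator 1 t = b - c := by
  have hinter : Set.Ici c ∩ Set.Icc a b = Set.Icc c b := by
    ext
    simp only [Set.mem_inter_iff, Set.mem_Ici, Set.mem_Icc]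
    grind
  rw [setIntegral_congr_set Ioo_ae_eq_Icc, integral_indicator_one measurableSet_Ici,
    measureReal_restrict_apply measurableSet_Ici, hinter, Real.volume_real_Icc_of_le hcb]

theorem integrable_indicator_Ici_one {μ : Measure ℝ} [IsFiniteMeasure μ] (c : ℝ) :
    Integrable ((Set.Ici c).indicator (1 : ℝ → ℝ)) μ :=
  (integrable_const (1 : ℝ)).indicator measurableSet_Ici

/-- The mass at or below `t` that is left after removing mass `s ∈ [m, m + 1)` from the bottom
of the sorted sample `x`. -/
noncomputable def trimmedCount {k : ℕ} (x : Fin k → ℝ) (m : ℕ) (hm : m < k) (s t : ℝ) : ℝ :=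
  (m + 1 - s) * (Set.Ici (x ⟨m, hm⟩)).indicator 1 t
    + ∑ i ∈ ({i | m < (i : ℕ)} : Finset (Fin k)), (Set.Ici (x i)).indicator 1 t

section trimmedCount

variable {k m : ℕ} {x : Fin k → ℝ} (hm : m < k) {s : ℝ}

theorem Monotone.max_card_filter_le_sub_eq_trimmedCount (hx : Monotone x) (hms : (m : ℝ) ≤ s)
    (hsm : s < m + 1) (t : ℝ) :
    max ((#{i | x i ≤ t} : ℝ) - s) 0 = trimmedCount x m hm s t := by
  unfold trimmedCount
  by_cases hxm : x ⟨m, hm⟩ ≤ t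
  · have hsum : ∑ i ∈ ({i | m < (i : ℕ)} : Finset (Fin k)), (Set.Ici (x i)).indicator 1 t
        = (#{i : Fin k | m < (i : ℕ) ∧ x i ≤ t} : ℝ) := by
      simp only [Set.indicator_apply, Set.mem_Ici, Pi.one_apply, sum_boole, filter_filter]
    rw [hx.card_filter_le_eq_of_le hxm, Set.indicator_of_mem (Set.mem_Ici.2 hxm), hsum]
    push_cast
    rw [max_eq_left (by linarith), Pi.one_apply]
    ring
  · have hcard : (#{i | x i ≤ t} : ℝ) ≤ m := by
      exact_mod_cast hx.card_filter_le_le_of_not_le hxm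
    rw [max_eq_right (by linarith), Set.indicator_of_notMem (by simpa using hxm),
      sum_eq_zero fun i hi => Set.indicator_of_notMem ?_ _]
    · ring
    · rw [mem_filter] at hi
      exact fun hit => hxm ((hx (Fin.le_def.2 hi.2.le)).trans hit)

theorem integrable_trimmedCount {μ : Measure ℝ} [IsFiniteMeasure μ] :
    Integrable (trimmedCount x m hm s) μ :=
  ((integrable_indicator_Ici_one _).const_mul _).add
    (integrable_finsetSum _ fun _ _ => integrable_indicator_Ici_one _)

theorem integral_trimmedCount {a b : ℝ} (hxa : ∀ i, a ≤ x i) (hxb : ∀ i, x i ≤ b) :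
    ∫ t in Set.Ioo a b, trimmedCount x m hm s t
      = (m + 1 - s) * (b - x ⟨m, hm⟩)
        + ∑ i ∈ ({i | m < (i : ℕ)} : Finset (Fin k)), (b - x i) := by
  simp only [trimmedCount]
  rw [integral_add ((integrable_indicator_Ici_one _).const_mul _)
      (integrable_finsetSum _ fun _ _ => integrable_indicator_Ici_one _),
    integral_const_mul, integral_finsetSum _ fun _ _ => integrable_indicator_Ici_one _,
    integral_Ioo_indicator_Ici_one (hxa _) (hxb _)]
  exact congrArg _ (sum_congr rfl fun i _ => integral_Ioo_indicator_Ici_one (hxa i) (hxb i))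

end trimmedCount

/-- The expectation of the maximizing cdf `max(F̂−χ, 0)` of the DKW band on `[0,b]`
equals the boosted empirical average obtained by shifting a `χ·k` fraction of the
empirical probability mass to the upper bound `b`. -/
theorem dkw_upper_band_expectation_eq_boosted_average
    (k : ℕ) (hk : 1 ≤ k) (b : ℝ) (hb : 0 ≤ b)
    (x : Fin k → ℝ) (hmono : Monotone x)
    (hx0 : ∀ i, 0 ≤ x i) (hxb : ∀ i, x i ≤ b)
    (Fhat : ℝ → ℝ)
    (hFhat : ∀ t : ℝ,
      Fhat t = (1 / (k : ℝ)) * (Finset.univ.filter (fun i : Fin k => x i ≤ t)).card)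
    (χ : ℝ) (hχ0 : 0 ≤ χ)
    (m : ℕ) (hm : m = ⌊χ * k⌋₊) (hmk : m + 1 ≤ k) :
    (∫⁻ t in Set.Ioo (0 : ℝ) b, ENNReal.ofReal (1 - max (Fhat t - χ) 0))
      = ENNReal.ofReal ((1 / (k : ℝ)) *
          (χ * k * b + ((m : ℝ) + 1 - χ * k) * x ⟨m, by omega⟩
            + ∑ i ∈ Finset.univ.filter (fun i : Fin k => m < (i : ℕ)), x i)) := by
  have hk0 : (0 : ℝ) < k := by exact_mod_cast hk
  have hband (t : ℝ) : max (Fhat t - χ) 0 = trimmedCount x m hmk (χ * k) t / k := by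
    rw [← hmono.max_card_filter_le_sub_eq_trimmedCount hmk (hm ▸ Nat.floor_le (by positivity))
      (hm ▸ Nat.lt_floor_add_one _) t, ← max_div_div_right hk0.le, zero_div, hFhat]
    congr 1
    field_simp
  have hFhat_le (t : ℝ) : Fhat t ≤ 1 := by
    rw [hFhat, one_div, inv_mul_le_one₀ hk0]
    exact_mod_cast (card_le_univ _).trans (Fintype.card_fin k).le
  have hintegrable : Integrable (fun t => 1 - trimmedCount x m hmk (χ * k) t / k)
      (volume.restrict (Set.Ioo 0 b)) :=
    (integrable_const 1).sub ((integrable_trimmedCount hmk).div_const _)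
  simp_rw [hband]
  rw [← ofReal_integral_eq_lintegral_ofReal hintegrable
    (ae_of_all _ fun t => sub_nonneg.2 (hband t ▸ max_le (by linarith [hFhat_le t]) zero_le_one))]
  congr 1
  rw [integral_sub (integrable_const 1) ((integrable_trimmedCount hmk).div_const _), integral_div,
    integral_trimmedCount hmk hx0 hxb, setIntegral_const, Real.volume_real_Ioo_of_le hb,
    sum_sub_distrib, sum_const, Fin.card_filter_lt_val hmk, nsmul_eq_mul, Nat.cast_sub hmk]
  push_cast
  field_simp
  ring
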